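/- arXiv:math/0201039 — 7 statements merged into one kernel-verified Lean document; each statement's English description precedes it below -/
import Mathlib

section
/- The decomposition e = e^⊤ + e^⊥ of the unity is a decomposition into orthogonal idempotents: e^⊤ ∘ e^⊤ = e^⊤, e^⊥ ∘ e^⊥ = e^⊥, and e^⊤ ∘ e^⊥ = 0. -/
/-- Under the hypotheses of Lemma 2.8, the decomposition `e = e^⊤ + e^⊥` of the
unity is a decomposition into orthogonal idempotents:
`e^⊤ ∘ e^⊤ = e^⊤`, `e^⊥ ∘ e^⊥ = e^⊥`, and `e^⊤ ∘ e^⊥ = 0`. -/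
theorem unity_decomposition_orthogonal_idempotents
    {V : Type*} [AddCommGroup V] [Module ℂ V] [FiniteDimensional ℂ V]
    (B : LinearMap.BilinForm ℂ V)
    (hBsymm : ∀ x y : V, B x y = B y x)
    (hBnd : B.Nondegenerate)
    (mul : V →ₗ[ℂ] V →ₗ[ℂ] V)
    (hcomm : ∀ x y : V, mul x y = mul y x)
    (hinv : ∀ x y z : V, B (mul x y) z = B x (mul y z))
    (W : Submodule ℂ V)
    (hres : (B.restrict W).Nondegenerate)
    (hcompl : IsCompl W (B.orthogonal W))
    (hclosed : ∀ x y : V, x ∈ W → y ∈ W → mul x y ∈ W)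
    (e eT eP : V)
    (hunity : ∀ x : V, mul e x = x)
    (heT : eT ∈ W) (heP : eP ∈ B.orthogonal W) (hdecomp : e = eT + eP) :
    mul eT eT = eT ∧ mul eP eP = eP ∧ mul eT eP = 0 := by
  -- `mul eT eP` lies in the orthogonal complement of `W`
  have hperp : mul eT eP ∈ B.orthogonal W := by
    intro n hn
    have h1 : B (mul n eT) eP = B n (mul eT eP) := hinv n eT eP
    have h2 : B (mul n eT) eP = 0 := heP _ (hclosed n eT hn heT)
    show B n (mul eT eP) = 0
    rw [← h1, h2]
  -- `mul eT eP` also lies in `W`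
  have key : mul eT eT + mul eP eT = eT := by
    have := hunity eT
    rw [hdecomp] at this
    simpa [map_add] using this
  have hmem : mul eT eP ∈ W := by
    have : mul eP eT = eT - mul eT eT := by
      exact eq_sub_of_add_eq' key
    rw [hcomm eT eP, this]
    exact W.sub_mem heT (hclosed eT eT heT heT)
  have hzero : mul eT eP = 0 := by
    have := hcompl.disjoint
    rw [Submodule.disjoint_def] at this
    exact this _ hmem hperp
  refine ⟨?_, ?_, hzero⟩
  · have := key
    rw [hcomm eP eT, hzero, add_zero] at this
    exact this
  · have := hunity eP
    rw [hdecomp] at this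
    have h : mul eT eP + mul eP eP = eP := by simpa [map_add] using this
    rw [hzero, zero_add] at h
    exact h
end

section
/- The subspace W with the restricted structures is a Frobenius algebra: W is closed under ∘, the restricted multiplication on W is commutative and associative with unity e^⊤, the restriction of B to W is a symmetric nondegenerate bilinear form, and B(x ∘ y, z) = B(x, y ∘ z) holds for all x, y, z ∈ W (Corollary 2.9 of the paper, in algebraic form). -/
/-! Invariance of `B` makes `W^⊥` stable under multiplication by `W`. Writing `e = e^⊤ + e^⊥`,
for `x ∈ W` the element `e^⊥ ∘ x = x - e^⊤ ∘ x` then lies in both `W` and `W^⊥`, so it vanishes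
and `e^⊤` is a unity for `W`. All other Frobenius axioms are inherited from `V`. -/

namespace LinearMap.BilinForm

variable {R M : Type*} [CommRing R] [AddCommGroup M] [Module R M]
  {B : LinearMap.BilinForm R M} {mul : M →ₗ[R] M →ₗ[R] M} {W : Submodule R M}

theorem mul_mem_orthogonal_of_invariant
    (hinv : ∀ x y z, B (mul x y) z = B x (mul y z))
    (hclosed : ∀ x y, x ∈ W → y ∈ W → mul x y ∈ W)
    {x p : M} (hx : x ∈ W) (hp : p ∈ B.orthogonal W) : mul x p ∈ B.orthogonal W := by
  rw [mem_orthogonal_iff]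
  intro w hw
  rw [← hinv]
  exact hp _ (hclosed w x hw hx)

theorem mul_eq_self_of_unit_eq_add_orthogonal
    (hcomm : ∀ x y, mul x y = mul y x)
    (hinv : ∀ x y z, B (mul x y) z = B x (mul y z))
    (hdisj : Disjoint W (B.orthogonal W))
    (hclosed : ∀ x y, x ∈ W → y ∈ W → mul x y ∈ W)
    {e eT eP : M} (hunity : ∀ x, mul e x = x)
    (heT : eT ∈ W) (heP : eP ∈ B.orthogonal W) (hdecomp : e = eT + eP)
    {x : M} (hx : x ∈ W) : mul eT x = x := by
  have hsum : mul eP x = x - mul eT x := by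
    rw [eq_sub_iff_add_eq, add_comm, ← LinearMap.add_apply, ← map_add, ← hdecomp, hunity]
  have hmemW : mul eP x ∈ W := hsum ▸ W.sub_mem hx (hclosed eT x heT hx)
  have hmemOrth : mul eP x ∈ B.orthogonal W :=
    hcomm x eP ▸ mul_mem_orthogonal_of_invariant hinv hclosed hx heP
  have hzero : mul eP x = 0 := Submodule.disjoint_def.mp hdisj _ hmemW hmemOrth
  rw [hzero, eq_comm, sub_eq_zero, eq_comm] at hsum
  exact hsum

end LinearMap.BilinForm

theorem subspace_is_Frobenius_algebra_general
    {V : Type*} [AddCommGroup V] [Module ℂ V]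
    (B : LinearMap.BilinForm ℂ V)
    (hBsymm : ∀ x y : V, B x y = B y x)
    (mul : V →ₗ[ℂ] V →ₗ[ℂ] V)
    (hcomm : ∀ x y : V, mul x y = mul y x)
    (hassoc : ∀ x y z : V, mul (mul x y) z = mul x (mul y z))
    (hinv : ∀ x y z : V, B (mul x y) z = B x (mul y z))
    (W : Submodule ℂ V)
    (hres : (B.restrict W).Nondegenerate)
    (hcompl : IsCompl W (B.orthogonal W))
    (hclosed : ∀ x y : V, x ∈ W → y ∈ W → mul x y ∈ W)
    (e eT eP : V)
    (hunity : ∀ x : V, mul e x = x)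
    (heT : eT ∈ W) (heP : eP ∈ B.orthogonal W) (hdecomp : e = eT + eP) :
    (∀ x y : V, x ∈ W → y ∈ W → mul x y ∈ W) ∧
    (∀ x y : V, x ∈ W → y ∈ W → mul x y = mul y x) ∧
    (∀ x y z : V, x ∈ W → y ∈ W → z ∈ W → mul (mul x y) z = mul x (mul y z)) ∧
    (eT ∈ W ∧ ∀ x : V, x ∈ W → mul eT x = x ∧ mul x eT = x) ∧
    (∀ x y : V, x ∈ W → y ∈ W → B x y = B y x) ∧
    (B.restrict W).Nondegenerate ∧
    (∀ x y z : V, x ∈ W → y ∈ W → z ∈ W → B (mul x y) z = B x (mul y z)) := by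
  have hunit : ∀ x ∈ W, mul eT x = x := fun x hx =>
    LinearMap.BilinForm.mul_eq_self_of_unit_eq_add_orthogonal hcomm hinv hcompl.disjoint hclosed
      hunity heT heP hdecomp hx
  exact ⟨hclosed, fun x y _ _ => hcomm x y, fun x y z _ _ _ => hassoc x y z,
    ⟨heT, fun x hx => ⟨hunit x hx, hcomm x eT ▸ hunit x hx⟩⟩,
    fun x y _ _ => hBsymm x y, hres, fun x y z _ _ _ => hinv x y z⟩

/-- Corollary 2.9, algebraic form.  Suppose `V` is a finite-dimensional complex
vector space with nondegenerate symmetric bilinear form `B` and a commutative, associative,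
`B`-invariant bilinear multiplication `∘` with unity `e`.  If `W` is a subspace with `W ∘ W ⊆ W`
on which the restriction of `B` is nondegenerate, and `e = e^⊤ + e^⊥` with `e^⊤ ∈ W`,
`e^⊥ ∈ W^⊥`, then `W` with the restricted structures is a Frobenius algebra: `W` is closed
under `∘`, the restricted multiplication is commutative and associative with unity `e^⊤ ∈ W`,
the restriction of `B` to `W` is symmetric and nondegenerate, and the invariance
`B (x ∘ y) z = B x (y ∘ z)` holds on `W`. -/
theorem subspace_is_Frobenius_algebra
    {V : Type*} [AddCommGroup V] [Module ℂ V] [FiniteDimensional ℂ V]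
    (B : LinearMap.BilinForm ℂ V)
    (hBsymm : ∀ x y : V, B x y = B y x)
    (hBnd : B.Nondegenerate)
    (mul : V →ₗ[ℂ] V →ₗ[ℂ] V)
    (hcomm : ∀ x y : V, mul x y = mul y x)
    (hassoc : ∀ x y z : V, mul (mul x y) z = mul x (mul y z))
    (hinv : ∀ x y z : V, B (mul x y) z = B x (mul y z))
    (W : Submodule ℂ V)
    (hres : (B.restrict W).Nondegenerate)
    (hcompl : IsCompl W (B.orthogonal W))
    (hclosed : ∀ x y : V, x ∈ W → y ∈ W → mul x y ∈ W)
    (e eT eP : V)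
    (hunity : ∀ x : V, mul e x = x)
    (heT : eT ∈ W) (heP : eP ∈ B.orthogonal W) (hdecomp : e = eT + eP) :
    (∀ x y : V, x ∈ W → y ∈ W → mul x y ∈ W) ∧
    (∀ x y : V, x ∈ W → y ∈ W → mul x y = mul y x) ∧
    (∀ x y z : V, x ∈ W → y ∈ W → z ∈ W → mul (mul x y) z = mul x (mul y z)) ∧
    (eT ∈ W ∧ ∀ x : V, x ∈ W → mul eT x = x ∧ mul x eT = x) ∧
    (∀ x y : V, x ∈ W → y ∈ W → B x y = B y x) ∧
    (B.restrict W).Nondegenerate ∧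
    (∀ x y z : V, x ∈ W → y ∈ W → z ∈ W → B (mul x y) z = B x (mul y z)) :=
  subspace_is_Frobenius_algebra_general B hBsymm mul hcomm hassoc hinv W hres hcompl hclosed e eT eP
    hunity heT heP hdecomp
end

section
/- Let n ≥ 1, let U ⊆ ℝⁿ be a nonempty open connected set, and let h : ℝⁿ → ℝ be continuously differentiable on U. Suppose that for every u ∈ U and all indices α, β ∈ {1,…,n} the partial derivatives satisfy (∂h/∂u_α)(u) · (∂h/∂u_β)(u) = δ_{αβ} · (∂h/∂u_α)(u). Then either h is constant on U, or there exist an index π ∈ {1,…,n} and a constant b ∈ ℝ such that h(u) = u_π + b for all u ∈ U. (This is the classification step in the proof of Theorem 2.10(a): the defining functions of a natural submanifold of a semi-simple F-manifold are, in canonical coordinates, constants or shifted coordinate functions.) -/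
/-!
The hypothesis says that each differential `dh u` is a multiplicative linear functional on the
algebra `ℝⁿ` with componentwise product (`∂_α ∘ ∂_β = δ_{αβ} ∂_α`). Its values on the basis
vectors are idempotents of `ℝ`, hence lie in `{0, 1}`; being continuous on the connected set `U`,
they are constant, so `h` is affine on `U` with linear part `L = dh u₀`. Finally a multiplicative
linear functional on `ℝⁿ` is either `0` or a coordinate projection.
-/

open Set

variable {ι : Type*}

theorem IsPreconnected.eq_of_continuousOn_of_isIdempotentElem {X G₀ : Type*}
    [TopologicalSpace X] [MonoidWithZero G₀] [IsLeftCancelMulZero G₀] [TopologicalSpace G₀]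
    [T1Space G₀] {S : Set X} (hS : IsPreconnected S) {f : X → G₀} (hf : ContinuousOn f S)
    (hidem : ∀ x ∈ S, IsIdempotentElem (f x)) {x y : X} (hx : x ∈ S) (hy : y ∈ S) :
    f x = f y :=
  hS.constant_of_mapsTo (toFinite {0, 1}).isDiscrete hf
    (fun z hz ↦ IsIdempotentElem.iff_eq_zero_or_one.1 (hidem z hz)) hx hy

theorem ContinuousLinearMap.ext_pi_single [Finite ι] [DecidableEq ι]
    {L L' : (ι → ℝ) →L[ℝ] ℝ} (h : ∀ i, L (Pi.single i 1) = L' (Pi.single i 1)) : L = L' :=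
  coe_injective <| (Pi.basisFun ℝ ι).ext fun i ↦ by simpa using h i

theorem ContinuousLinearMap.eq_zero_or_eq_proj_of_map_single_mul [Finite ι] [DecidableEq ι]
    (L : (ι → ℝ) →L[ℝ] ℝ)
    (hL : ∀ α β : ι, L (Pi.single α 1) * L (Pi.single β 1)
      = (if α = β then (1 : ℝ) else 0) * L (Pi.single α 1)) :
    L = 0 ∨ ∃ π, L = proj π := by
  by_cases hzero : ∀ i, L (Pi.single i 1) = 0
  · exact .inl <| ext_pi_single fun i ↦ by simpa using hzero i
  obtain ⟨π, hπ⟩ := not_forall.1 hzero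
  have hπ_one : L (Pi.single π 1) = 1 := by
    have hidem : IsIdempotentElem (L (Pi.single π 1)) := (hL π π).trans (by simp)
    exact (IsIdempotentElem.iff_eq_zero_or_one.1 hidem).resolve_left hπ
  refine .inr ⟨π, ext_pi_single fun α ↦ ?_⟩
  by_cases hα : α = π
  · subst hα
    simpa using hπ_one
  · have hα_zero := hL α π
    rw [hπ_one, mul_one, if_neg hα, zero_mul] at hα_zero
    simp [hα_zero, hα]

theorem fderiv_eq_of_contDiffOn_of_isIdempotentElem_partials [Fintype ι] [DecidableEq ι]
    {U : Set (ι → ℝ)} (hU : IsOpen U) (hUc : IsPreconnected U) {h : (ι → ℝ) → ℝ}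
    (hC1 : ContDiffOn ℝ 1 h U)
    (hidem : ∀ u ∈ U, ∀ α, IsIdempotentElem (fderiv ℝ h u (Pi.single α 1)))
    {u v : ι → ℝ} (hu : u ∈ U) (hv : v ∈ U) : fderiv ℝ h u = fderiv ℝ h v :=
  ContinuousLinearMap.ext_pi_single fun α ↦
    hUc.eq_of_continuousOn_of_isIdempotentElem
      ((hC1.continuousOn_fderiv_of_isOpen hU le_rfl).clm_apply continuousOn_const)
      (fun w hw ↦ hidem w hw α) hu hv

theorem natural_submanifold_defining_functions_general
    {n : ℕ}
    (U : Set (Fin n → ℝ)) (hUopen : IsOpen U) (hUconn : IsConnected U)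
    (h : (Fin n → ℝ) → ℝ) (hC1 : ContDiffOn ℝ 1 h U)
    (hmult : ∀ u ∈ U, ∀ α β : Fin n,
      fderiv ℝ h u (Pi.single α 1) * fderiv ℝ h u (Pi.single β 1)
        = (if α = β then (1 : ℝ) else 0) * fderiv ℝ h u (Pi.single α 1)) :
    (∃ c : ℝ, ∀ u ∈ U, h u = c) ∨
    (∃ (π : Fin n) (b : ℝ), ∀ u ∈ U, h u = u π + b) := by
  obtain ⟨u₀, hu₀⟩ := hUconn.nonempty
  set L := fderiv ℝ h u₀
  have hidem : ∀ u ∈ U, ∀ α, IsIdempotentElem (fderiv ℝ h u (Pi.single α 1)) :=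
    fun u hu α ↦ (hmult u hu α α).trans (by simp)
  have hfderiv : EqOn (fderiv ℝ h) (fderiv ℝ L) U := fun u hu ↦ by
    rw [L.fderiv]
    exact fderiv_eq_of_contDiffOn_of_isIdempotentElem_partials hUopen hUconn.isPreconnected
      hC1 hidem hu hu₀
  obtain ⟨b, hb⟩ := hUopen.exists_eq_add_of_fderiv_eq hUconn.isPreconnected
    (hC1.differentiableOn one_ne_zero) L.differentiable.differentiableOn hfderiv
  rcases L.eq_zero_or_eq_proj_of_map_single_mul (hmult u₀ hu₀) with hL | ⟨π, hL⟩
  · exact .inl ⟨b, fun u hu ↦ by simpa [hL] using hb hu⟩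
  · exact .inr ⟨π, b, fun u hu ↦ by simpa [hL] using hb hu⟩

/-- classification step in the proof of Theorem 2.10(a).  Let `n ≥ 1`, let
`U ⊆ ℝⁿ` be a nonempty open connected set and `h` continuously differentiable on `U`.  If for
all `u ∈ U` and all `α, β` the partial derivatives satisfy
`(∂h/∂u_α)(u) · (∂h/∂u_β)(u) = δ_{αβ} · (∂h/∂u_α)(u)`, then either `h` is constant on `U`, or
there are an index `π` and a constant `b` with `h u = u π + b` on `U`. -/
theorem natural_submanifold_defining_functions
    {n : ℕ} (hn : 1 ≤ n)
    (U : Set (Fin n → ℝ)) (hUopen : IsOpen U) (hUconn : IsConnected U) (hUne : U.Nonempty)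
    (h : (Fin n → ℝ) → ℝ) (hC1 : ContDiffOn ℝ 1 h U)
    (hmult : ∀ u ∈ U, ∀ α β : Fin n,
      fderiv ℝ h u (Pi.single α 1) * fderiv ℝ h u (Pi.single β 1)
        = (if α = β then (1 : ℝ) else 0) * fderiv ℝ h u (Pi.single α 1)) :
    (∃ c : ℝ, ∀ u ∈ U, h u = c) ∨
    (∃ (π : Fin n) (b : ℝ), ∀ u ∈ U, h u = u π + b) :=
  natural_submanifold_defining_functions_general U hUopen hUconn h hC1 hmult
end

section
/- Let n ≥ 1, let U ⊆ ℝⁿ be a nonempty open connected set, and let h : ℝⁿ → ℝ be continuously differentiable on U with (∂h/∂u_α)(u) · (∂h/∂u_β)(u) = δ_{αβ} · (∂h/∂u_α)(u) for all u ∈ U and all α, β ∈ {1,…,n}. If in addition the Euler (homogeneity) condition Σ_{α=1}^{n} u_α (∂h/∂u_α)(u) = h(u) holds for all u ∈ U, then either h = 0 on U, or there exists an index π ∈ {1,…,n} with h(u) = u_π for all u ∈ U. (This is the tangency-of-the-Euler-field step in the proof of Theorem 2.10(a), which forces the integration constants to vanish and yields the classification of natural submanifolds as intersections of discriminant hypersurfaces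 {u_i = 0} and caustic hypersurfaces {u_i = u_j}.) -/
/-- tangency of the Euler field, in the proof of Theorem 2.10(a).  Under the
hypotheses of Statement 6, if in addition the Euler homogeneity condition
`Σ_α u_α (∂h/∂u_α)(u) = h(u)` holds on `U`, then either `h = 0` on `U`, or there is an index
`π` with `h u = u π` on `U`. -/
theorem natural_submanifold_defining_functions_euler
    {n : ℕ} (hn : 1 ≤ n)
    (U : Set (Fin n → ℝ)) (hUopen : IsOpen U) (hUconn : IsConnected U) (hUne : U.Nonempty)
    (h : (Fin n → ℝ) → ℝ) (hC1 : ContDiffOn ℝ 1 h U)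
    (hmult : ∀ u ∈ U, ∀ α β : Fin n,
      fderiv ℝ h u (Pi.single α 1) * fderiv ℝ h u (Pi.single β 1)
        = (if α = β then (1 : ℝ) else 0) * fderiv ℝ h u (Pi.single α 1))
    (heuler : ∀ u ∈ U, ∑ α : Fin n, u α * fderiv ℝ h u (Pi.single α 1) = h u) :
    (∀ u ∈ U, h u = 0) ∨ (∃ π : Fin n, ∀ u ∈ U, h u = u π) := by
  classical
  set p : Fin n → (Fin n → ℝ) → ℝ := fun α u => fderiv ℝ h u (Pi.single α 1) with hp
  -- each partial is 0 or 1
  have hval : ∀ u ∈ U, ∀ α, p α u = 0 ∨ p α u = 1 := by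
    intro u hu α
    have hm : p α u * p α u = p α u := by simpa using hmult u hu α α
    have : p α u * (p α u - 1) = 0 := by nlinarith
    rcases mul_eq_zero.mp this with h0 | h1
    · exact Or.inl h0
    · exact Or.inr (by linarith)
  -- continuity of the partials on U
  have hcont : ∀ α, ContinuousOn (p α) U := by
    intro α
    have h1 : ContinuousOn (fderiv ℝ h) U :=
      hC1.continuousOn_fderiv_of_isOpen hUopen le_rfl
    exact (ContinuousLinearMap.apply ℝ ℝ (Pi.single α 1 : Fin n → ℝ)).continuous.comp_continuousOn h1
  -- constancy on the connected set
  have hconst : ∀ α, (∀ u ∈ U, p α u = 0) ∨ (∀ u ∈ U, p α u = 1) := by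
    intro α
    have hA : IsOpen (U ∩ p α ⁻¹' Set.Iio (1/2)) :=
      (hcont α).isOpen_inter_preimage hUopen isOpen_Iio
    have hB : IsOpen (U ∩ p α ⁻¹' Set.Ioi (1/2)) :=
      (hcont α).isOpen_inter_preimage hUopen isOpen_Ioi
    have hsub : U ⊆ (U ∩ p α ⁻¹' Set.Iio (1/2)) ∪ (U ∩ p α ⁻¹' Set.Ioi (1/2)) := by
      intro u hu
      rcases hval u hu α with h0 | h1
      · exact Or.inl ⟨hu, by norm_num [Set.mem_preimage, h0]⟩
      · exact Or.inr ⟨hu, by norm_num [Set.mem_preimage, h1]⟩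
    by_cases hex : ∃ v ∈ U, p α v = 1
    · right
      intro u hu
      rcases hval u hu α with h0 | h1
      · exfalso
        obtain ⟨v, hv, hv1⟩ := hex
        have hne1 : (U ∩ (U ∩ p α ⁻¹' Set.Iio (1/2))).Nonempty :=
          ⟨u, hu, hu, by norm_num [Set.mem_preimage, h0]⟩
        have hne2 : (U ∩ (U ∩ p α ⁻¹' Set.Ioi (1/2))).Nonempty :=
          ⟨v, hv, hv, by norm_num [Set.mem_preimage, hv1]⟩
        obtain ⟨w, -, ⟨-, hw1⟩, ⟨-, hw2⟩⟩ :=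
          hUconn.isPreconnected _ _ hA hB hsub hne1 hne2
        simp only [Set.mem_preimage, Set.mem_Iio, Set.mem_Ioi] at hw1 hw2
        linarith
      · exact h1
    · left
      intro u hu
      rcases hval u hu α with h0 | h1
      · exact h0
      · exact absurd ⟨u, hu, h1⟩ hex
  by_cases hexπ : ∃ π : Fin n, ∀ u ∈ U, p π u = 1
  · obtain ⟨π, hπ⟩ := hexπ
    right
    refine ⟨π, fun u hu => ?_⟩
    rw [← heuler u hu]
    have hzero : ∀ β : Fin n, β ≠ π → p β u = 0 := by
      intro β hβ
      have hm : p β u * p π u = 0 := by simpa [hβ] using hmult u hu β π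
      rw [hπ u hu, mul_one] at hm
      exact hm
    calc (∑ α : Fin n, u α * p α u) = u π * p π u := by
          refine Finset.sum_eq_single π (fun β _ hβ => by rw [hzero β hβ, mul_zero]) ?_
          · intro hnot; exact absurd (Finset.mem_univ π) hnot
      _ = u π := by rw [hπ u hu, mul_one]
  · left
    intro u hu
    rw [← heuler u hu]
    have hzero : ∀ α : Fin n, p α u = 0 := by
      intro α
      rcases hconst α with h0 | h1
      · exact h0 u hu
      · exact absurd ⟨α, h1⟩ hexπ
    have hz : ∀ α : Fin n, (fderiv ℝ h u) (Pi.single α 1) = 0 := hzero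
    simp [hz]
end

section
/- Let C ∈ ℂ, C ≠ 0, and q = C · Π_{r=1}^{n} (X − α_r)^{k_r}. Fix j ∈ {1,…,n} and let P_j be the unique polynomial of degree < k_j with (X − α_j)^{k_j} ∣ P_j · Π_{r≠j} (X − α_r)^{k_r} − 1. Then for every ε > 0 with |α_i − α_j| > ε for all i ≠ j, the circle integral of z ↦ 1/q(z) over the circle of radius ε centered at α_j equals 2πi · C^{-1} · (coefficient of X^{k_j − 1} in P_j). (This is the residue computation of Main Example A: res_{z=α_j} 1/p′(z) = p^{(j)}_{k_j−1}/((m+1)(k_j−1)!), which shows the induced metric on a caustic of the A_m Frobenius manifold is Egoroff.) -/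
/-!
Partial fractions: writing `q = c (X - α j)^(k j) Q` and `P Q - 1 = (X - α j)^(k j) g`, on the
circle `1 / q = c⁻¹ (P / (z - α j)^(k j) - g / Q)`. The term `g / Q` is holomorphic on the closed
disc, so its integral vanishes. Expanding `P` in powers of `z - α j`, only the `(z - α j)⁻¹` term
contributes, and since `deg P < k j` its Taylor coefficient is the coefficient of `X^(k j - 1)`
of `P` itself.
-/

open Polynomial Metric Set Complex Real

theorem Polynomial.taylor_coeff_of_natDegree_le {R : Type*} [CommSemiring R] {f : R[X]} {n : ℕ}
    (h : f.natDegree ≤ n) (r : R) : (taylor r f).coeff n = f.coeff n := by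
  rcases h.lt_or_eq with h | rfl
  · rw [coeff_eq_zero_of_natDegree_lt h, coeff_eq_zero_of_natDegree_lt (by rwa [natDegree_taylor])]
  · rw [coeff_taylor_natDegree, coeff_natDegree]

theorem inv_mul_mul_eq_mul_div_sub_div {K : Type*} [Field K] {c A Q P g : K} (hA : A ≠ 0)
    (hQ : Q ≠ 0) (h : P * Q - 1 = A * g) : (c * (A * Q))⁻¹ = c⁻¹ * (P / A - g / Q) := by
  have hnum : P * Q - A * g = 1 := by linear_combination h
  rw [div_sub_div _ _ hA hQ, hnum, one_div, mul_inv]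

theorem eval_prod_X_sub_C_pow_ne_zero_of_mem_closedBall {ι : Type*} (s : Finset ι) (α : ι → ℂ)
    (k : ι → ℕ) {c : ℂ} {R : ℝ} (hs : ∀ r ∈ s, R < ‖α r - c‖) {z : ℂ} (hz : z ∈ closedBall c R) :
    (∏ r ∈ s, (X - C (α r)) ^ (k r)).eval z ≠ 0 := by
  rw [eval_prod, Finset.prod_ne_zero_iff]
  intro r hr
  have hzr : z ≠ α r := by
    rintro rfl
    exact (hs r hr).not_ge (mem_closedBall_iff_norm.1 hz)
  simp [sub_eq_zero, hzr]

namespace circleIntegral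

theorem integral_sub_center_zpow {c : ℂ} {R : ℝ} (hR : 0 < R) (n : ℤ) :
    (∮ z in C(c, R), (z - c) ^ n) = if n = -1 then 2 * π * I else 0 := by
  split_ifs with h
  · simpa [h] using integral_sub_center_inv c hR.ne'
  · exact integral_sub_zpow_of_ne h c c R

theorem integral_eval_sub_div_sub_pow_succ (p : ℂ[X]) {c : ℂ} {R : ℝ} (hR : 0 < R) (m : ℕ) :
    (∮ z in C(c, R), p.eval (z - c) / (z - c) ^ (m + 1)) = 2 * π * I * p.coeff m := by
  have hm : m ∈ Finset.range (p.natDegree + m + 1) := Finset.mem_range.2 (by omega)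
  have hexpand : EqOn (fun z => p.eval (z - c) / (z - c) ^ (m + 1))
      (fun z => ∑ i ∈ Finset.range (p.natDegree + m + 1),
        p.coeff i * (z - c) ^ ((i : ℤ) - (m + 1 : ℕ))) (sphere c R) := by
    intro z hz
    dsimp only
    have hz : z - c ≠ 0 := sub_ne_zero.2 (ne_of_mem_sphere hz hR.ne')
    rw [eval_eq_sum_range' (n := p.natDegree + m + 1) (by omega), Finset.sum_div]
    refine Finset.sum_congr rfl fun i _ => ?_
    rw [zpow_sub₀ hz, zpow_natCast, zpow_natCast, mul_div_assoc]
  have hint : ∀ i ∈ Finset.range (p.natDegree + m + 1),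
      CircleIntegrable (fun z => p.coeff i * (z - c) ^ ((i : ℤ) - (m + 1 : ℕ))) c R :=
    fun i _ => (circleIntegrable_sub_zpow_iff.2
      (Or.inr (Or.inr (by simp [abs_of_pos hR, hR.ne])))).const_fun_smul
  rw [integral_congr hR.le hexpand, integral_fun_sum hint]
  simp only [integral_const_mul, integral_sub_center_zpow hR]
  rw [Finset.sum_eq_single_of_mem m hm fun i _ hi => by rw [if_neg (by omega), mul_zero]]
  rw [if_pos (by omega), mul_comm]

theorem integral_eval_div_sub_pow_of_degree_lt {P : ℂ[X]} {m : ℕ} (hP : P.degree < m) {c : ℂ}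
    {R : ℝ} (hR : 0 < R) :
    (∮ z in C(c, R), P.eval z / (z - c) ^ m) = 2 * π * I * P.coeff (m - 1) := by
  cases m with
  | zero => simp [degree_eq_bot.1 (Nat.WithBot.lt_zero_iff.1 hP), circleIntegral]
  | succ m =>
    simp_rw [← taylor_eval_sub c P]
    rw [integral_eval_sub_div_sub_pow_succ _ hR, Nat.add_sub_cancel,
      taylor_coeff_of_natDegree_le (natDegree_le_of_degree_le (Order.le_of_lt_succ hP))]

theorem integral_eval_div_eval_eq_zero (g : ℂ[X]) {Q : ℂ[X]} {c : ℂ} {R : ℝ} (hR : 0 ≤ R)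
    (hQ : ∀ z ∈ closedBall c R, Q.eval z ≠ 0) :
    (∮ z in C(c, R), g.eval z / Q.eval z) = 0 :=
  Complex.circleIntegral_eq_zero_of_differentiable_on_off_countable hR countable_empty
    (g.continuous.continuousOn.div Q.continuous.continuousOn hQ)
    fun z hz => g.differentiableAt.div Q.differentiableAt (hQ z (ball_subset_closedBall hz.1))

end circleIntegral

theorem residue_of_inv_polynomial_at_multiple_root_general
    {n : ℕ} (α : Fin n → ℂ)
    (k : Fin n → ℕ)
    (c : ℂ)
    (q : ℂ[X]) (hq : q = C c * ∏ r, (X - C (α r)) ^ (k r))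
    (j : Fin n)
    (P : ℂ[X]) (hPdeg : P.degree < (k j : WithBot ℕ))
    (hPdvd : (X - C (α j)) ^ (k j) ∣
      (P * ∏ r ∈ Finset.univ.erase j, (X - C (α r)) ^ (k r) - 1))
    (ε : ℝ) (hε : 0 < ε)
    (hsep : ∀ i : Fin n, i ≠ j → ε < ‖α i - α j‖) :
    ∫ θ in (0 : ℝ)..(2 * Real.pi),
        (q.eval (α j + (ε : ℂ) * Complex.exp (θ * Complex.I)))⁻¹ *
          (Complex.I * (ε : ℂ) * Complex.exp (θ * Complex.I))
      = 2 * Real.pi * Complex.I * c⁻¹ * P.coeff (k j - 1) := by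
  set Q := ∏ r ∈ Finset.univ.erase j, (X - C (α r)) ^ (k r)
  obtain ⟨g, hg⟩ := hPdvd
  have hQ : ∀ z ∈ closedBall (α j) ε, Q.eval z ≠ 0 :=
    fun z => eval_prod_X_sub_C_pow_ne_zero_of_mem_closedBall _ α k
      fun r hr => hsep r (Finset.ne_of_mem_erase hr)
  have hpole : ∀ z ∈ sphere (α j) ε, (z - α j) ^ k j ≠ 0 := fun z hz =>
    pow_ne_zero _ (sub_ne_zero.2 (ne_of_mem_sphere hz hε.ne'))
  have hpf : EqOn (fun z => (q.eval z)⁻¹)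
      (fun z => c⁻¹ * (P.eval z / (z - α j) ^ k j - g.eval z / Q.eval z))
      (sphere (α j) ε) := fun z hz => by
    dsimp only
    rw [hq, ← Finset.mul_prod_erase _ _ (Finset.mem_univ j), eval_mul, eval_mul, eval_C, eval_pow,
      eval_sub, eval_X, eval_C]
    refine inv_mul_mul_eq_mul_div_sub_div (hpole z hz) (hQ z (sphere_subset_closedBall hz)) ?_
    simpa using congrArg (eval z) hg
  have hint_pole : CircleIntegrable (fun z => P.eval z / (z - α j) ^ k j) (α j) ε :=
    (P.continuous.continuousOn.div (by fun_prop) hpole).circleIntegrable hε.le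
  have hint_reg : CircleIntegrable (fun z => g.eval z / Q.eval z) (α j) ε :=
    (g.continuous.continuousOn.div Q.continuous.continuousOn
      fun z hz => hQ z (sphere_subset_closedBall hz)).circleIntegrable hε.le
  calc _ = ∮ z in C(α j, ε), (q.eval z)⁻¹ := by
        simp only [circleIntegral, deriv_circleMap, circleMap, smul_eq_mul, zero_add]
        congr 1; funext θ; ring
    _ = c⁻¹ * ((∮ z in C(α j, ε), P.eval z / (z - α j) ^ k j)
          - ∮ z in C(α j, ε), g.eval z / Q.eval z) := by
        rw [circleIntegral.integral_congr hε.le hpf, circleIntegral.integral_const_mul,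
          circleIntegral.integral_sub hint_pole hint_reg]
    _ = _ := by
        rw [circleIntegral.integral_eval_div_sub_pow_of_degree_lt hPdeg hε,
          circleIntegral.integral_eval_div_eval_eq_zero g hε.le hQ]
        ring

/-- residue computation of Main Example A.  Let `c ≠ 0`,
`q = c · Π_r (X − α r)^(k r)` with the `α r` distinct, fix `j`, and let `P` be the unique
polynomial of degree `< k j` with `(X − α j)^(k j) ∣ P · Π_{r ≠ j}(X − α r)^(k r) − 1`.  Then
for every `ε > 0` smaller than all distances `|α i − α j|` (`i ≠ j`), the circle integral of
`z ↦ 1 / q z` over the circle of radius `ε` about `α j` equals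
`2πi · c⁻¹ · (coefficient of X^(k j − 1) in P)`. -/
theorem residue_of_inv_polynomial_at_multiple_root
    {n : ℕ} (α : Fin n → ℂ) (hα : Function.Injective α)
    (k : Fin n → ℕ) (hk : ∀ i, 0 < k i)
    (c : ℂ) (hc : c ≠ 0)
    (q : ℂ[X]) (hq : q = C c * ∏ r, (X - C (α r)) ^ (k r))
    (j : Fin n)
    (P : ℂ[X]) (hPdeg : P.degree < (k j : WithBot ℕ))
    (hPdvd : (X - C (α j)) ^ (k j) ∣
      (P * ∏ r ∈ Finset.univ.erase j, (X - C (α r)) ^ (k r) - 1))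
    (ε : ℝ) (hε : 0 < ε)
    (hsep : ∀ i : Fin n, i ≠ j → ε < ‖α i - α j‖) :
    ∫ θ in (0 : ℝ)..(2 * Real.pi),
        (q.eval (α j + (ε : ℂ) * Complex.exp (θ * Complex.I)))⁻¹ *
          (Complex.I * (ε : ℂ) * Complex.exp (θ * Complex.I))
      = 2 * Real.pi * Complex.I * c⁻¹ * P.coeff (k j - 1) :=
  residue_of_inv_polynomial_at_multiple_root_general α k c q hq j P hPdeg hPdvd ε hε hsep
end

section
/- Let u, v, w : ℝ² → ℝ be differentiable functions of (X, T) satisfying ∂u/∂T = (1/2)·u·(−∂u/∂X + ∂v/∂X + ∂w/∂X), ∂v/∂T = (1/2)·v·(∂u/∂X − ∂v/∂X + ∂w/∂X), ∂w/∂T = (1/2)·w·(∂u/∂X + ∂v/∂X − ∂w/∂X) at every point. Then the elementary symmetric functions S := u + v + w, P := uv + vw + wu, Q := uvw satisfy the three-component dispersionless Toda system ∂S/∂T = ∂P/∂X − (1/2)·S·∂S/∂X, ∂P/∂T = ∂Q/∂X, and ∂Q/∂T = (1/2)·Q·∂S/∂X. -/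
/-- Main Example B, three components.  If differentiable functions
`u, v, w : ℝ² → ℝ` of `(X, T)` satisfy
`∂u/∂T = (1/2)·u·(−u_X + v_X + w_X)`, `∂v/∂T = (1/2)·v·(u_X − v_X + w_X)`,
`∂w/∂T = (1/2)·w·(u_X + v_X − w_X)`, then the elementary symmetric functions `S := u + v + w`,
`P := uv + vw + wu`, `Q := uvw` satisfy the three-component dispersionless Toda system
`S_T = P_X − (1/2)·S·S_X`, `P_T = Q_X`, `Q_T = (1/2)·Q·S_X`. -/
theorem dispersionless_toda_three_component_modified_variables
    (u v w : ℝ × ℝ → ℝ)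
    (hu : Differentiable ℝ u) (hv : Differentiable ℝ v) (hw : Differentiable ℝ w)
    (huT : ∀ p : ℝ × ℝ, fderiv ℝ u p ((0, 1) : ℝ × ℝ)
      = (1 / 2) * u p * (-(fderiv ℝ u p ((1, 0) : ℝ × ℝ)) + fderiv ℝ v p ((1, 0) : ℝ × ℝ)
          + fderiv ℝ w p ((1, 0) : ℝ × ℝ)))
    (hvT : ∀ p : ℝ × ℝ, fderiv ℝ v p ((0, 1) : ℝ × ℝ)
      = (1 / 2) * v p * (fderiv ℝ u p ((1, 0) : ℝ × ℝ) - fderiv ℝ v p ((1, 0) : ℝ × ℝ)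
          + fderiv ℝ w p ((1, 0) : ℝ × ℝ)))
    (hwT : ∀ p : ℝ × ℝ, fderiv ℝ w p ((0, 1) : ℝ × ℝ)
      = (1 / 2) * w p * (fderiv ℝ u p ((1, 0) : ℝ × ℝ) + fderiv ℝ v p ((1, 0) : ℝ × ℝ)
          - fderiv ℝ w p ((1, 0) : ℝ × ℝ))) :
    ∀ p : ℝ × ℝ,
      fderiv ℝ (fun q => u q + v q + w q) p ((0, 1) : ℝ × ℝ)
          = fderiv ℝ (fun q => u q * v q + v q * w q + w q * u q) p ((1, 0) : ℝ × ℝ)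
            - (1 / 2) * (u p + v p + w p)
              * fderiv ℝ (fun q => u q + v q + w q) p ((1, 0) : ℝ × ℝ) ∧
      fderiv ℝ (fun q => u q * v q + v q * w q + w q * u q) p ((0, 1) : ℝ × ℝ)
          = fderiv ℝ (fun q => u q * v q * w q) p ((1, 0) : ℝ × ℝ) ∧
      fderiv ℝ (fun q => u q * v q * w q) p ((0, 1) : ℝ × ℝ)
          = (1 / 2) * (u p * v p * w p)
              * fderiv ℝ (fun q => u q + v q + w q) p ((1, 0) : ℝ × ℝ) := by

  intro p
  have hu' := (hu p).hasFDerivAt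
  have hv' := (hv p).hasFDerivAt
  have hw' := (hw p).hasFDerivAt
  have hS : HasFDerivAt (fun q => u q + v q + w q)
      (fderiv ℝ u p + fderiv ℝ v p + fderiv ℝ w p) p := (hu'.add hv').add hw'
  have hP : HasFDerivAt (fun q => u q * v q + v q * w q + w q * u q)
      ((u p • fderiv ℝ v p + v p • fderiv ℝ u p)
        + (v p • fderiv ℝ w p + w p • fderiv ℝ v p)
        + (w p • fderiv ℝ u p + u p • fderiv ℝ w p)) p :=
    ((hu'.mul hv').add (hv'.mul hw')).add (hw'.mul hu')
  have hQ : HasFDerivAt (fun q => u q * v q * w q)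
      ((u p * v p) • fderiv ℝ w p
        + w p • (u p • fderiv ℝ v p + v p • fderiv ℝ u p)) p :=
    (hu'.mul hv').mul hw'
  rw [hS.fderiv, hP.fderiv, hQ.fderiv]
  simp only [ContinuousLinearMap.add_apply, ContinuousLinearMap.smul_apply, smul_eq_mul,
    huT p, hvT p, hwT p]
  refine ⟨by ring, by ring, by ring⟩
end

section
/- For n ≥ 2 define on ℝⁿ the characteristic speeds λ_i(u) = (Σ_{r=1}^{n} u_r) + 2u_i and the metric coefficients g_i(u) = Π_{r≠i} (u_r − u_i). Then for all i ≠ j in {1,…,n} and all u ∈ ℝⁿ: (a) ∂λ_i/∂u_j = 1 and λ_j(u) − λ_i(u) = 2(u_j − u_i); and (b) (u_j − u_i) · (∂g_i/∂u_j)(u) = g_i(u). Consequently, at every point with pairwise distinct coordinates, ∂_j log√(g_i) = (∂_j λ_i)/(λ_j − λ_i), i.e. the dispersionless coupled KdV system u^i_T = λ_i(u) u^i_X is semi-Hamiltonian with diagonal metric g_ii = g_i. -/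
/-- The characteristic speeds `λ_i(u) = (Σ_r u_r) + 2 u_i` of the dispersionless coupled KdV
system. -/
noncomputable def cKdVSpeed {n : ℕ} (i : Fin n) (u : Fin n → ℝ) : ℝ :=
  (∑ r, u r) + 2 * u i

/-- The diagonal metric coefficients `g_i(u) = Π_{r ≠ i} (u_r − u_i)` for the dispersionless
coupled KdV system. -/
noncomputable def cKdVMetric {n : ℕ} (i : Fin n) (u : Fin n → ℝ) : ℝ :=
  ∏ r ∈ Finset.univ.erase i, (u r - u i)

/-! The semi-Hamiltonian identity reduces to two partial derivatives. The speed `λ_i` is linear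
with `∂_j λ_i = 1`, so `λ_j − λ_i = 2 (u_j − u_i)`. The metric `g_i` is a product of linear
factors of which only `u_j − u_i` involves `u_j`, so `(u_j − u_i) ∂_j g_i = g_i`. Since
`log √|g| = (log |g|) / 2` has derivative `g' / (2 g)` wherever `g ≠ 0`, both sides equal
`1 / (2 (u_j − u_i))`. -/

theorem fderiv_log_sqrt_abs_apply {E : Type*} [NormedAddCommGroup E] [NormedSpace ℝ E]
    {f : E → ℝ} {u : E} (hf : DifferentiableAt ℝ f u) (hu : f u ≠ 0) (v : E) :
    fderiv ℝ (fun x => Real.log (Real.sqrt |f x|)) u v = fderiv ℝ f u v / (2 * f u) := by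
  have half_log :
      (fun x => Real.log (Real.sqrt |f x|)) = fun x => (1 / 2 : ℝ) * Real.log (f x) := by
    funext x
    rw [Real.log_sqrt (abs_nonneg _), Real.log_abs]
    ring
  rw [half_log, ((hf.hasFDerivAt.log hu).const_mul (1 / 2 : ℝ)).fderiv]
  simp only [FunLike.coe_smul, Pi.smul_apply, smul_eq_mul]
  field_simp

namespace CoupledKdV

open ContinuousLinearMap

variable {n : ℕ} {i j : Fin n}

theorem hasFDerivAt_cKdVSpeed (i : Fin n) (u : Fin n → ℝ) :
    HasFDerivAt (cKdVSpeed i) (∑ r, (proj r : (Fin n → ℝ) →L[ℝ] ℝ) + (2 : ℝ) • proj i) u := by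
  have hsum :
      HasFDerivAt (fun v : Fin n → ℝ => ∑ r, v r) (∑ r, (proj r : (Fin n → ℝ) →L[ℝ] ℝ)) u :=
    HasFDerivAt.fun_sum fun r _ => hasFDerivAt_apply r u
  exact hsum.add ((hasFDerivAt_apply i u).const_mul 2)

theorem fderiv_cKdVSpeed_single (hij : i ≠ j) (u : Fin n → ℝ) :
    fderiv ℝ (cKdVSpeed i) u (Pi.single j 1) = 1 := by
  rw [(hasFDerivAt_cKdVSpeed i u).fderiv]
  simp [Pi.single_apply, hij.symm]

theorem cKdVSpeed_sub_cKdVSpeed (i j : Fin n) (u : Fin n → ℝ) :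
    cKdVSpeed j u - cKdVSpeed i u = 2 * (u j - u i) := by
  simp only [cKdVSpeed]
  ring

theorem hasFDerivAt_cKdVMetric (i : Fin n) (u : Fin n → ℝ) :
    HasFDerivAt (cKdVMetric i)
      (∑ r ∈ Finset.univ.erase i, (∏ s ∈ (Finset.univ.erase i).erase r, (u s - u i)) •
        ((proj r : (Fin n → ℝ) →L[ℝ] ℝ) - proj i)) u :=
  HasFDerivAt.finsetProd fun r _ => (hasFDerivAt_apply r u).sub (hasFDerivAt_apply i u)

theorem fderiv_cKdVMetric_single (hij : i ≠ j) (u : Fin n → ℝ) :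
    fderiv ℝ (cKdVMetric i) u (Pi.single j 1)
      = ∏ s ∈ (Finset.univ.erase i).erase j, (u s - u i) := by
  rw [(hasFDerivAt_cKdVMetric i u).fderiv]
  simp [Pi.single_apply, hij.symm, Finset.sum_ite_eq']

theorem sub_mul_fderiv_cKdVMetric_single (hij : i ≠ j) (u : Fin n → ℝ) :
    (u j - u i) * fderiv ℝ (cKdVMetric i) u (Pi.single j 1) = cKdVMetric i u := by
  rw [fderiv_cKdVMetric_single hij, cKdVMetric]
  exact Finset.mul_prod_erase _ (fun r => u r - u i)
    (Finset.mem_erase.2 ⟨hij.symm, Finset.mem_univ j⟩)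

theorem cKdVMetric_ne_zero (i : Fin n) {u : Fin n → ℝ} (hu : Function.Injective u) :
    cKdVMetric i u ≠ 0 :=
  Finset.prod_ne_zero_iff.2 fun _ hr => sub_ne_zero.2 (hu.ne (Finset.ne_of_mem_erase hr))

end CoupledKdV

open CoupledKdV in
theorem coupled_kdv_semi_hamiltonian_general
    {n : ℕ} :
    ∀ i j : Fin n, i ≠ j → ∀ u : Fin n → ℝ,
      (fderiv ℝ (cKdVSpeed i) u (Pi.single j 1) = 1 ∧
        cKdVSpeed j u - cKdVSpeed i u = 2 * (u j - u i)) ∧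
      ((u j - u i) * fderiv ℝ (cKdVMetric i) u (Pi.single j 1) = cKdVMetric i u) ∧
      ((∀ r s : Fin n, r ≠ s → u r ≠ u s) →
        fderiv ℝ (fun x => Real.log (Real.sqrt |cKdVMetric i x|)) u (Pi.single j 1)
          = fderiv ℝ (cKdVSpeed i) u (Pi.single j 1)
              / (cKdVSpeed j u - cKdVSpeed i u)) := by
  intro i j hij u
  have hmetric := sub_mul_fderiv_cKdVMetric_single hij u
  refine ⟨⟨fderiv_cKdVSpeed_single hij u, cKdVSpeed_sub_cKdVSpeed i j u⟩, hmetric,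
    fun hdist => ?_⟩
  have hg : cKdVMetric i u ≠ 0 := cKdVMetric_ne_zero i fun r s => not_imp_not.mp (hdist r s)
  have hji : u j - u i ≠ 0 := sub_ne_zero.2 (hdist j i hij.symm)
  have hderiv : fderiv ℝ (cKdVMetric i) u (Pi.single j 1) = cKdVMetric i u / (u j - u i) := by
    rw [eq_div_iff hji, mul_comm, hmetric]
  rw [fderiv_log_sqrt_abs_apply (hasFDerivAt_cKdVMetric i u).differentiableAt hg, hderiv,
    fderiv_cKdVSpeed_single hij, cKdVSpeed_sub_cKdVSpeed]
  field_simp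

/-- For `n ≥ 2`, `λ_i(u) = (Σ_r u_r) + 2u_i` and
`g_i(u) = Π_{r ≠ i}(u_r − u_i)`, for all `i ≠ j` and all `u`:
(a) `∂λ_i/∂u_j = 1` and `λ_j(u) − λ_i(u) = 2(u_j − u_i)`;
(b) `(u_j − u_i) · ∂g_i/∂u_j (u) = g_i(u)`.
Consequently, at every point with pairwise distinct coordinates,
`∂_j log √(g_i) = (∂_j λ_i)/(λ_j − λ_i)` (the square root taken of `|g_i|`, as `g_i` is only
nonzero, not necessarily positive, there); i.e. the dispersionless coupled KdV system
`u^i_T = λ_i(u) u^i_X` is semi-Hamiltonian with diagonal metric `g_ii = g_i`. -/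
theorem coupled_kdv_semi_hamiltonian
    {n : ℕ} (hn : 2 ≤ n) :
    ∀ i j : Fin n, i ≠ j → ∀ u : Fin n → ℝ,
      (fderiv ℝ (cKdVSpeed i) u (Pi.single j 1) = 1 ∧
        cKdVSpeed j u - cKdVSpeed i u = 2 * (u j - u i)) ∧
      ((u j - u i) * fderiv ℝ (cKdVMetric i) u (Pi.single j 1) = cKdVMetric i u) ∧
      ((∀ r s : Fin n, r ≠ s → u r ≠ u s) →
        fderiv ℝ (fun x => Real.log (Real.sqrt |cKdVMetric i x|)) u (Pi.single j 1)
          = fderiv ℝ (cKdVSpeed i) u (Pi.single j 1)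
              / (cKdVSpeed j u - cKdVSpeed i u)) :=
  coupled_kdv_semi_hamiltonian_general
end
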